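/- arXiv:1911.07406 — 5 statements merged into one kernel-verified Lean document; each statement's English description precedes it below -/
import Mathlib

section
/- Let S be a nonempty discrete space, 𝒦 a filter on S, and ℬ ⊆ ℒ(𝒦) a family closed under finite intersections. Then there exists an ultrafilter p on S with ℬ ⊆ p ⊆ ℒ(𝒦). -/
/-- If `ℬ ⊆ ℒ(𝒦)` is closed under finite intersections, then there is an
ultrafilter `p` with `ℬ ⊆ p ⊆ ℒ(𝒦)`. -/
theorem exists_ultrafilter_between {S : Type*} [Nonempty S] (𝒦 : Filter S) [𝒦.NeBot]
    (ℬ : Set (Set S)) (hℬ : ∀ A ∈ ℬ, Aᶜ ∉ 𝒦)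
    (hinter : ∀ A ∈ ℬ, ∀ B ∈ ℬ, A ∩ B ∈ ℬ) :
    ∃ p : Ultrafilter S, (∀ A ∈ ℬ, A ∈ p) ∧ ∀ A ∈ p, Aᶜ ∉ 𝒦 := by
  -- finite nonempty subfamilies of ℬ have sInter in ℬ
  have hfin : ∀ t : Set (Set S), t.Finite → t ⊆ ℬ → t.Nonempty → ⋂₀ t ∈ ℬ := by
    intro t htf
    refine Set.Finite.induction_on (motive := fun t _ => t ⊆ ℬ → t.Nonempty → ⋂₀ t ∈ ℬ)
      t htf (fun _ h => absurd h (by simp)) ?_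
    intro a s ha hsf ih hsub hnon
    rcases s.eq_empty_or_nonempty with rfl | hne
    · simpa using hsub (Set.mem_insert a ∅)
    · have ha : a ∈ ℬ := hsub (Set.mem_insert a s)
      have hs : ⋂₀ s ∈ ℬ := ih (fun x hx => hsub (Set.mem_insert_of_mem a hx)) hne
      rw [Set.sInter_insert]
      exact hinter a ha _ hs
  have hne : (𝒦 ⊓ Filter.generate ℬ).NeBot := by
    rw [← Filter.forall_mem_nonempty_iff_neBot]
    intro s hs
    rw [Filter.mem_inf_iff] at hs
    obtain ⟨t₁, ht₁, t₂, ht₂, rfl⟩ := hs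
    rw [Filter.mem_generate_iff] at ht₂
    obtain ⟨t, htB, htf, hsub⟩ := ht₂
    rcases t.eq_empty_or_nonempty with rfl | htne
    · have : t₁.Nonempty := Filter.nonempty_of_mem ht₁
      simp only [Set.sInter_empty] at hsub
      exact this.mono (by intro x hx; exact ⟨hx, hsub (Set.mem_univ x)⟩)
    · have hB : ⋂₀ t ∈ ℬ := hfin t htf htB htne
      have : ¬ t₁ ⊆ (⋂₀ t)ᶜ := fun h => hℬ _ hB (𝒦.mem_of_superset ht₁ h)
      rw [Set.not_subset] at this
      obtain ⟨x, hx1, hx2⟩ := this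
      simp only [Set.mem_compl_iff, not_not] at hx2
      exact ⟨x, hx1, hsub hx2⟩
  obtain ⟨p, hp⟩ := Ultrafilter.exists_le (𝒦 ⊓ Filter.generate ℬ)
  have hpK : (p : Filter S) ≤ 𝒦 := hp.trans inf_le_left
  have hpB : (p : Filter S) ≤ Filter.generate ℬ := hp.trans inf_le_right
  refine ⟨p, fun A hA => hpB (Filter.mem_generate_of_mem hA), fun A hA hc => ?_⟩
  have : Aᶜ ∈ p := hpK hc
  exact (Ultrafilter.compl_notMem_iff.mpr hA) this
end

section
/- Let S be a dense subsemigroup of a Hausdorff semitopological semigroup (T,+) and let e be an idempotent of T. Then e*_S = {p ∈ βS : e ∈ ⋂_{A∈p} cl_T(A)}, the set of ultrafilters on S converging to e, is a compact subsemigroup of (βS,+) provided it is nonempty. -/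
open Filter Topology Set

attribute [local instance] Ultrafilter.add Ultrafilter.addSemigroup

universe u

section NearIdem

variable {T : Type u} [AddSemigroup T] [TopologicalSpace T]

/-- The set of ultrafilters on `S` converging to `e` (denoted `e*_S`). -/
def EStar (S : AddSubsemigroup T) (e : T) : Set (Ultrafilter S) :=
  {p | ∀ U ∈ nhds e, {s : S | (s : T) ∈ U} ∈ p}

/-- `B ⊆ S` is syndetic near `e`. -/
def SyndeticNear (S : AddSubsemigroup T) (e : T) (B : Set S) : Prop :=
  ∀ U ∈ nhds e, ∃ F : Finset S, (∀ t ∈ F, (t : T) ∈ U) ∧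
    ∃ V ∈ nhds e, ∀ s : S, (s : T) ∈ V → ∃ t ∈ F, t + s ∈ B

/-- `A ⊆ S` is topologically piecewise syndetic near `e`. -/
def TopPWSNear (S : AddSubsemigroup T) (e : T) (A : Set S) : Prop :=
  ∀ U ∈ nhds e, ∃ F : Finset S, (∀ t ∈ F, (t : T) ∈ U) ∧
    ∃ V ∈ nhds e, ∀ G : Finset S, ∀ O ∈ nhds e, ∃ x : S, (x : T) ∈ O ∧
      ∀ g ∈ G, (g : T) ∈ V → ∃ t ∈ F, t + (g + x) ∈ A

/-- Left ideal of a subsemigroup `E` of `βM`. -/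
def IsLeftIdealIn {M : Type*} [AddSemigroup M] (E L : Set (Ultrafilter M)) : Prop :=
  L.Nonempty ∧ L ⊆ E ∧ ∀ p ∈ E, ∀ q ∈ L, p + q ∈ L

/-- Minimal left ideal of `E`. -/
def IsMinimalLeftIdealIn {M : Type*} [AddSemigroup M] (E L : Set (Ultrafilter M)) : Prop :=
  IsLeftIdealIn E L ∧ ∀ L', IsLeftIdealIn E L' → L' ⊆ L → L' = L

/-- The smallest ideal `K(E)`, the union of all minimal left ideals of `E`. -/
def SmallestIdeal {M : Type*} [AddSemigroup M] (E : Set (Ultrafilter M)) : Set (Ultrafilter M) :=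
  {p | ∃ L, IsMinimalLeftIdealIn E L ∧ p ∈ L}

/-- `T_p(x) = p`-`lim_(s ∈ S) T_s(x)`. -/
noncomputable def TP {M : Type*} {X : Type*} [TopologicalSpace X]
    (Ts : M → X → X) (p : Ultrafilter M) (x : X) : X :=
  (p.map fun s => Ts s x).lim

/-- `x` is a uniformly recurrent point near `e`. -/
def UnifRecNear (S : AddSubsemigroup T) (e : T) {X : Type*} [TopologicalSpace X]
    (Ts : S → X → X) (x : X) : Prop :=
  ∀ W ∈ nhds x, SyndeticNear S e {s : S | Ts s x ∈ W}

/-- `x` and `y` are proximal near `e` (characterized via `e*_S`). -/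
noncomputable def ProximalNear (S : AddSubsemigroup T) (e : T) {X : Type*} [TopologicalSpace X]
    (Ts : S → X → X) (x y : X) : Prop :=
  ∃ p ∈ EStar S e, TP Ts p x = TP Ts p y

theorem Ultrafilter.isClosed_setOf_tendsto {α β : Type*} (m : α → β) (l : Filter β) :
    IsClosed {p : Ultrafilter α | Tendsto m p l} := by
  have h : {p : Ultrafilter α | Tendsto m p l} = ⋂ s ∈ l, {p | m ⁻¹' s ∈ p} := by
    ext p
    simp only [mem_ofPred_eq, mem_iInter, tendsto_def, Ultrafilter.mem_coe]
  rw [h]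
  exact isClosed_biInter fun s _ => ultrafilter_isClosed_basic _

theorem Ultrafilter.tendsto_add {M X : Type*} [Add M] [Add X] [TopologicalSpace X] (φ : M →ₙ+ X)
    {p q : Ultrafilter M} {a b : X} (hr : ContinuousAt (· + b) a)
    (hl : ∀ x : X, ContinuousAt (x + ·) b)
    (hp : Tendsto φ p (𝓝 a)) (hq : Tendsto φ q (𝓝 b)) :
    Tendsto φ ↑(p + q) (𝓝 (a + b)) := by
  refine tendsto_nhds.mpr fun U hU hab => ?_
  have hp' : ∀ᶠ m in p, φ m + b ∈ U := hp (hr.preimage_mem_nhds (hU.mem_nhds hab))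
  refine (Ultrafilter.eventually_add p q (fun m => φ m ∈ U)).mpr (hp'.mono fun m hm => ?_)
  filter_upwards [hq ((hl (φ m)).preimage_mem_nhds (hU.mem_nhds hm))] with n hn
  rw [map_add]
  exact hn

variable [T2Space T]

theorem eStar_compact_subsemigroup_general (S : AddSubsemigroup T)
    (hl : ∀ t : T, Continuous fun x : T => t + x)
    (hr : ∀ t : T, Continuous fun x : T => x + t)
    (e : T) (he : e + e = e) :
    IsCompact (EStar S e) ∧
      ∀ p ∈ EStar S e, ∀ q ∈ EStar S e, p + q ∈ EStar S e := by
  -- `EStar S e` is `{p | Tendsto (↑) p (𝓝 e)}` with `Tendsto` unfolded.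
  refine ⟨(Ultrafilter.isClosed_setOf_tendsto ((↑) : S → T) (𝓝 e)).isCompact,
    fun p hp q hq => ?_⟩
  have hpq := Ultrafilter.tendsto_add (AddMemClass.subtype S) (hr e).continuousAt
    (fun x => (hl x).continuousAt) hp hq
  rwa [he] at hpq

/-- `e*_S` is a compact subsemigroup of `(βS, +)` (provided it is nonempty). -/
theorem eStar_compact_subsemigroup (S : AddSubsemigroup T) (hdense : Dense (S : Set T))
    (hl : ∀ t : T, Continuous fun x : T => t + x)
    (hr : ∀ t : T, Continuous fun x : T => x + t)
    (e : T) (he : e + e = e)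
    (hne : (EStar S e).Nonempty) :
    IsCompact (EStar S e) ∧
      ∀ p ∈ EStar S e, ∀ q ∈ EStar S e, p + q ∈ EStar S e :=
  eStar_compact_subsemigroup_general S hl hr e he

end NearIdem
end

section
/- Let S be a dense subsemigroup of a Hausdorff semitopological semigroup (T,+), e an idempotent of T, and (X, ⟨T_s⟩_{s∈S}) a dynamical system. Two points x, y ∈ X are proximal near e if and only if there exists p ∈ e*_S such that T_p(x) = T_p(y). -/
/-!
Both sides say that the filter `comap (↑) (𝓝 e) ⊓ comap (fun s ↦ (T_s x, T_s y)) (𝓝ˢ Δ)` on `S`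
is nontrivial. For the left side this is just unfolding. For the right side, an ultrafilter `p`
has `T_p x = T_p y` iff `(T_s x, T_s y)` tends to `𝓝ˢ Δ` along `p`: in the compact Hausdorff
space `X × X` the `p`-limit exists, and a point off the closed diagonal `Δ` has a
neighbourhood disjoint from a neighbourhood of `Δ`.
-/

open Filter Topology Set

attribute [local instance] Ultrafilter.add Ultrafilter.addSemigroup

universe u

section NearIdem

variable {T : Type u} [AddSemigroup T] [TopologicalSpace T]

theorem mem_eStar_iff (S : AddSubsemigroup T) (e : T) (p : Ultrafilter S) :
    p ∈ EStar S e ↔ ↑p ≤ comap ((↑) : S → T) (𝓝 e) :=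
  tendsto_iff_comap

theorem Filter.comap_inf_comap_neBot_iff {α β γ : Type*} (f : α → β) (g : α → γ)
    (l : Filter β) (l' : Filter γ) :
    (comap f l ⊓ comap g l').NeBot ↔ ∀ s ∈ l, ∀ t ∈ l', ∃ a, f a ∈ s ∧ g a ∈ t := by
  simp only [inf_neBot_iff, mem_comap]
  constructor
  · intro h s hs t ht
    exact h ⟨s, hs, subset_rfl⟩ ⟨t, ht, subset_rfl⟩
  · rintro h _ ⟨s, hs, hsub⟩ _ ⟨t, ht, htsub⟩
    obtain ⟨a, has, hat⟩ := h s hs t ht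
    exact ⟨a, hsub has, htsub hat⟩

section CompactLimits

variable {α X : Type*} [TopologicalSpace X] [CompactSpace X]

theorem Ultrafilter.tendsto_lim_map (p : Ultrafilter α) (f : α → X) :
    Tendsto f p (𝓝 (p.map f).lim) := by
  rw [Tendsto, ← Ultrafilter.coe_map]
  exact (p.map f).le_nhds_lim

variable [T2Space X]

theorem Ultrafilter.tendsto_nhdsSet_diagonal_iff_lim_eq (p : Ultrafilter α) (f g : α → X) :
    Tendsto (fun a => (f a, g a)) p (𝓝ˢ (diagonal X)) ↔ (p.map f).lim = (p.map g).lim := by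
  have hfg := (p.tendsto_lim_map f).prodMk_nhds (p.tendsto_lim_map g)
  refine ⟨fun h => ?_, fun h => hfg.mono_right (nhds_le_nhdsSet h)⟩
  by_contra hne
  have : Disjoint (𝓝ˢ (diagonal X)) (𝓝 ((p.map f).lim, (p.map g).lim)) := by
    rwa [disjoint_nhdsSet_nhds, isClosed_diagonal.closure_eq]
  exact h.not_tendsto this hfg

theorem Filter.exists_ultrafilter_le_lim_eq_iff (L : Filter α) (f g : α → X) :
    (∃ p : Ultrafilter α, ↑p ≤ L ∧ (p.map f).lim = (p.map g).lim) ↔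
      (L ⊓ comap (fun a => (f a, g a)) (𝓝ˢ (diagonal X))).NeBot := by
  simp only [← exists_ultrafilter_iff, le_inf_iff, ← tendsto_iff_comap,
    Ultrafilter.tendsto_nhdsSet_diagonal_iff_lim_eq]

end CompactLimits

variable [T2Space T]

theorem proximalNear_iff_general (S : AddSubsemigroup T) (e : T)
    {X : Type u} [TopologicalSpace X] [CompactSpace X] [T2Space X]
    (Ts : S → X → X) (x y : X) :
    (∀ U ∈ nhdsSet (Set.diagonal X), ∀ V ∈ nhds e,
        ∃ s : S, (s : T) ∈ V ∧ (Ts s x, Ts s y) ∈ U) ↔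
      ProximalNear S e Ts x y := by
  rw [forall₂_comm, ← comap_inf_comap_neBot_iff, ProximalNear,
    ← exists_ultrafilter_le_lim_eq_iff]
  simp only [mem_eStar_iff, TP]

/-- `x` and `y` are proximal near `e` iff `T_p(x) = T_p(y)` for some `p ∈ e*_S`. -/
theorem proximalNear_iff (S : AddSubsemigroup T) (hdense : Dense (S : Set T))
    (hl : ∀ t : T, Continuous fun x : T => t + x)
    (hr : ∀ t : T, Continuous fun x : T => x + t)
    (e : T) (he : e + e = e)
    {X : Type u} [TopologicalSpace X] [CompactSpace X] [T2Space X]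
    (Ts : S → X → X) (hTcont : ∀ s, Continuous (Ts s))
    (hTact : ∀ s t z, Ts s (Ts t z) = Ts (s + t) z) (x y : X) :
    (∀ U ∈ nhdsSet (Set.diagonal X), ∀ V ∈ nhds e,
        ∃ s : S, (s : T) ∈ V ∧ (Ts s x, Ts s y) ∈ U) ↔
      ProximalNear S e Ts x y :=
  proximalNear_iff_general S e Ts x y

end NearIdem
end

section
/- Let S be a dense subsemigroup of (T,+), e ∈ E(T), (X,⟨T_s⟩_{s∈S}) a dynamical system, L a minimal left ideal of e*_S, and x ∈ X. If there exists u ∈ L with T_u(x) = x, then there exists an idempotent u' ∈ L with T_u'(x) = x. -/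
open Filter Topology Set

attribute [local instance] Ultrafilter.add Ultrafilter.addSemigroup

universe u

section NearIdem

variable {T : Type u} [AddSemigroup T] [TopologicalSpace T]

variable [T2Space T]

/-! The set of ultrafilters `p ∈ L` with `T_p x = x` is nonempty, closed under `+` because
`T_{p+q} = T_p ∘ T_q`, and compact: `p ↦ T_p x` is the continuous Stone–Čech extension of
`s ↦ T_s x`, and `L = e*_S + u` is the image of the compact set `e*_S` under the continuous map
`(· + u)`. The Ellis–Numakura lemma then yields an idempotent in it. -/

section ActionOfUltrafilters

variable {M X : Type*} [TopologicalSpace X] [CompactSpace X]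

theorem tendsto_TP (Ts : M → X → X) (p : Ultrafilter M) (x : X) :
    Tendsto (fun s => Ts s x) p (𝓝 (TP Ts p x)) :=
  (p.map fun s => Ts s x).le_nhds_lim

variable [T2Space X]

theorem TP_eq_of_tendsto {Ts : M → X → X} {p : Ultrafilter M} {x y : X}
    (h : Tendsto (fun s => Ts s x) p (𝓝 y)) : TP Ts p x = y :=
  tendsto_nhds_unique (tendsto_TP Ts p x) h

theorem TP_eq_extend (Ts : M → X → X) (x : X) :
    (fun p => TP Ts p x) = Ultrafilter.extend fun s => Ts s x :=
  funext fun p => (ultrafilter_extend_eq_iff.mpr (tendsto_TP Ts p x)).symm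

theorem continuous_TP (Ts : M → X → X) (x : X) :
    Continuous fun p : Ultrafilter M => TP Ts p x :=
  TP_eq_extend Ts x ▸ continuous_ultrafilter_extend _

theorem TP_add [AddSemigroup M] {Ts : M → X → X} (hTcont : ∀ s, Continuous (Ts s))
    (hTact : ∀ s t z, Ts s (Ts t z) = Ts (s + t) z) (p q : Ultrafilter M) (x : X) :
    TP Ts (p + q) x = TP Ts p (TP Ts q x) := by
  refine TP_eq_of_tendsto <| tendsto_nhds.mpr fun W hWo hW =>
    (Ultrafilter.eventually_add p q _).mpr ?_
  filter_upwards [tendsto_TP Ts p (TP Ts q x) (hWo.mem_nhds hW)] with a ha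
  have h : Tendsto (fun b => Ts (a + b) x) q (𝓝 (Ts a (TP Ts q x))) := by
    simpa only [Function.comp_def, hTact] using
      ((hTcont a).tendsto _).comp (tendsto_TP Ts q x)
  exact h (hWo.mem_nhds ha)

end ActionOfUltrafilters

section EStar

variable {G : Type*} [AddSemigroup G] [TopologicalSpace G]

theorem isClosed_EStar (S : AddSubsemigroup G) (e : G) : IsClosed (EStar S e) := by
  have h : EStar S e = ⋂ U ∈ 𝓝 e, {p : Ultrafilter S | {s : S | (s : G) ∈ U} ∈ p} := by
    ext p
    simp [EStar]
  rw [h]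
  exact isClosed_biInter fun U _ => ultrafilter_isClosed_basic _

theorem add_mem_EStar {S : AddSubsemigroup G} {e : G} (he : e + e = e)
    (hl : ∀ t : G, Continuous fun x : G => t + x) (hr : ∀ t : G, Continuous fun x : G => x + t)
    {p q : Ultrafilter S} (hp : p ∈ EStar S e) (hq : q ∈ EStar S e) : p + q ∈ EStar S e := by
  intro U hU
  have hU' : {t : G | t + e ∈ interior U} ∈ 𝓝 e :=
    (hr e).continuousAt.preimage_mem_nhds (he.symm ▸ interior_mem_nhds.mpr hU)
  refine (Ultrafilter.eventually_add p q _).mpr ?_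
  filter_upwards [hp _ hU'] with a ha
  filter_upwards [hq _ ((hl a).continuousAt.preimage_mem_nhds (isOpen_interior.mem_nhds ha))]
    with b hb
  exact interior_subset hb

end EStar

namespace IsMinimalLeftIdealIn

variable {M : Type*} [AddSemigroup M] {E L : Set (Ultrafilter M)}

theorem image_add_right_eq (hL : IsMinimalLeftIdealIn E L)
    (hE : ∀ p ∈ E, ∀ q ∈ E, p + q ∈ E) {u : Ultrafilter M} (hu : u ∈ L) :
    (· + u) '' E = L := by
  obtain ⟨⟨w, hw⟩, hLE, hLideal⟩ := hL.1
  refine hL.2 _ ⟨⟨w + u, w, hLE hw, rfl⟩, ?_, ?_⟩ ?_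
  · rintro _ ⟨p, hp, rfl⟩
    exact hLE (hLideal p hp u hu)
  · rintro r hr _ ⟨p, hp, rfl⟩
    exact ⟨r + p, hE r hr p hp, add_assoc r p u⟩
  · rintro _ ⟨p, hp, rfl⟩
    exact hLideal p hp u hu

theorem isCompact (hL : IsMinimalLeftIdealIn E L) (hE : ∀ p ∈ E, ∀ q ∈ E, p + q ∈ E)
    (hEc : IsCompact E) : IsCompact L := by
  obtain ⟨u, hu⟩ := hL.1.1
  rw [← hL.image_add_right_eq hE hu]
  exact hEc.image (Ultrafilter.continuous_add_left u)

end IsMinimalLeftIdealIn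

theorem exists_idempotent_fixing_general (S : AddSubsemigroup T)
    (hl : ∀ t : T, Continuous fun x : T => t + x)
    (hr : ∀ t : T, Continuous fun x : T => x + t)
    (e : T) (he : e + e = e)
    {X : Type u} [TopologicalSpace X] [CompactSpace X] [T2Space X]
    (Ts : S → X → X) (hTcont : ∀ s, Continuous (Ts s))
    (hTact : ∀ s t z, Ts s (Ts t z) = Ts (s + t) z) (L : Set (Ultrafilter S))
    (hL : IsMinimalLeftIdealIn (EStar S e) L) (x : X)
    (hfix : ∃ u ∈ L, TP Ts u x = x) :
    ∃ u ∈ L, u + u = u ∧ TP Ts u x = x := by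
  obtain ⟨u, huL, hux⟩ := hfix
  have hLc : IsCompact L :=
    hL.isCompact (fun p hp q hq => add_mem_EStar he hl hr hp hq) (isClosed_EStar S e).isCompact
  set A : Set (Ultrafilter S) := L ∩ {p | TP Ts p x = x}
  have hAc : IsCompact A := hLc.inter_right (isClosed_eq (continuous_TP Ts x) continuous_const)
  have hAadd : ∀ p ∈ A, ∀ q ∈ A, p + q ∈ A := by
    rintro p ⟨hpL, hpx : TP Ts p x = x⟩ q ⟨hqL, hqx : TP Ts q x = x⟩
    refine ⟨hL.1.2.2 p (hL.1.2.1 hpL) q hqL, ?_⟩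
    show TP Ts (p + q) x = x
    rw [TP_add hTcont hTact, hqx, hpx]
  obtain ⟨m, ⟨hmL, hmx⟩, hmm⟩ := exists_idempotent_in_compact_add_subsemigroup
    Ultrafilter.continuous_add_left A ⟨u, huL, hux⟩ hAc hAadd
  exact ⟨m, hmL, hmm, hmx⟩

/-- If some `u` in a minimal left ideal `L` of `e*_S` fixes `x`, then some
idempotent of `L` fixes `x`. -/
theorem exists_idempotent_fixing (S : AddSubsemigroup T) (hdense : Dense (S : Set T))
    (hl : ∀ t : T, Continuous fun x : T => t + x)
    (hr : ∀ t : T, Continuous fun x : T => x + t)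
    (e : T) (he : e + e = e)
    {X : Type u} [TopologicalSpace X] [CompactSpace X] [T2Space X]
    (Ts : S → X → X) (hTcont : ∀ s, Continuous (Ts s))
    (hTact : ∀ s t z, Ts s (Ts t z) = Ts (s + t) z) (L : Set (Ultrafilter S))
    (hL : IsMinimalLeftIdealIn (EStar S e) L) (x : X)
    (hfix : ∃ u ∈ L, TP Ts u x = x) :
    ∃ u ∈ L, u + u = u ∧ TP Ts u x = x :=
  exists_idempotent_fixing_general S hl hr e he Ts hTcont hTact L hL x hfix

end NearIdem
end

section
/- Let S be a dense subsemigroup of (T,+), e ∈ E(T), (X,⟨T_s⟩_{s∈S}) a dynamical system, and x, y ∈ X. There is an idempotent u in the smallest ideal K(e*_S) with T_u(x) = y if and only if y is uniformly recurrent near e and x and y are proximal near e. -/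
open Filter Topology Set

attribute [local instance] Ultrafilter.add Ultrafilter.addSemigroup

universe u

section NearIdem

variable {T : Type u} [AddSemigroup T] [TopologicalSpace T]

/-! If `u` is an idempotent in a minimal left ideal `L` of `e*_S` with `T_u x = y`, then
`T_u y = y`. For `q ∈ e*_S`, minimality of `L` gives `l` with `l + (q + u) = u`, so `T_l (T_q y) = y`:
from `T_q y` the orbit returns near `y` at times near `e`, and compactness of `e*_S` turns this into
syndeticity. Conversely, for `w` in a minimal left ideal `L ⊆ e*_S + p`, uniform recurrence yields
`v ∈ e*_S` with `T_(v + w) y = y`; the compact subsemigroup of `L` fixing `y` contains an idempotent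
`u = r + p`, and `T_u x = T_r (T_p x) = T_r (T_p y) = y`. -/

section TP

variable {σ X : Type*} [TopologicalSpace X] [CompactSpace X]

lemma tendsto_tp (Ts : σ → X → X) (p : Ultrafilter σ) (x : X) :
    Tendsto (fun s => Ts s x) p (𝓝 (TP Ts p x)) := by
  have h := Ultrafilter.le_nhds_lim (p.map fun s => Ts s x)
  rwa [Ultrafilter.coe_map] at h

variable [T2Space X]

lemma tp_eq_of_tendsto {Ts : σ → X → X} {p : Ultrafilter σ} {x z : X}
    (h : Tendsto (fun s => Ts s x) p (𝓝 z)) : TP Ts p x = z :=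
  tendsto_nhds_unique (tendsto_tp Ts p x) h

lemma continuous_tp (Ts : σ → X → X) (x : X) :
    Continuous fun p : Ultrafilter σ => TP Ts p x := by
  convert continuous_ultrafilter_extend (fun s => Ts s x) using 1
  funext p
  exact (ultrafilter_extend_eq_iff.mpr (tendsto_tp Ts p x)).symm

lemma tp_add [AddSemigroup σ] {Ts : σ → X → X} (hTcont : ∀ s, Continuous (Ts s))
    (hTact : ∀ s t z, Ts s (Ts t z) = Ts (s + t) z) (p q : Ultrafilter σ) (x : X) :
    TP Ts (p + q) x = TP Ts p (TP Ts q x) := by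
  refine tp_eq_of_tendsto fun W hW => (Ultrafilter.eventually_add p q _).mpr ?_
  filter_upwards [tendsto_tp Ts p _ (interior_mem_nhds.mpr hW)] with a ha
  filter_upwards [tendsto_tp Ts q x
    ((hTcont a).continuousAt.preimage_mem_nhds (isOpen_interior.mem_nhds ha))] with b hb
  rw [← hTact]
  exact interior_subset hb

end TP

section Ideals

variable {σ : Type*} [AddSemigroup σ] {E L : Set (Ultrafilter σ)}

lemma isLeftIdealIn_image_add_right (hE : ∀ p ∈ E, ∀ q ∈ E, p + q ∈ E)
    {w : Ultrafilter σ} (hw : w ∈ E) : IsLeftIdealIn E ((· + w) '' E) := by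
  refine ⟨⟨w + w, w, hw, rfl⟩, ?_, ?_⟩
  · rintro _ ⟨r, hr, rfl⟩
    exact hE r hr w hw
  · rintro p hp _ ⟨r, hr, rfl⟩
    exact ⟨p + r, hE p hp r hr, add_assoc p r w⟩

lemma IsLeftIdealIn.image_add_right_subset (hL : IsLeftIdealIn E L) {w : Ultrafilter σ}
    (hw : w ∈ L) : (· + w) '' E ⊆ L := by
  rintro _ ⟨r, hr, rfl⟩
  exact hL.2.2 r hr w hw

lemma isClosed_image_add_right (hEcl : IsClosed E) (w : Ultrafilter σ) :
    IsClosed ((· + w) '' E) :=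
  (hEcl.isCompact.image (Ultrafilter.continuous_add_left w)).isClosed

lemma IsMinimalLeftIdealIn.image_add_right_eq_s9 (hE : ∀ p ∈ E, ∀ q ∈ E, p + q ∈ E)
    (hL : IsMinimalLeftIdealIn E L) {w : Ultrafilter σ} (hw : w ∈ L) : (· + w) '' E = L :=
  hL.2 _ (isLeftIdealIn_image_add_right hE (hL.1.2.1 hw)) (hL.1.image_add_right_subset hw)

lemma IsMinimalLeftIdealIn.isClosed (hE : ∀ p ∈ E, ∀ q ∈ E, p + q ∈ E) (hEcl : IsClosed E)
    (hL : IsMinimalLeftIdealIn E L) : IsClosed L := by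
  obtain ⟨w, hw⟩ := hL.1.1
  rw [← hL.image_add_right_eq_s9 hE hw]
  exact isClosed_image_add_right hEcl w

lemma IsChain.isLeftIdealIn_sInter {c : Set (Set (Ultrafilter σ))}
    (hc : IsChain (· ⊆ ·) c) (hcne : c.Nonempty) (hcL : ∀ L ∈ c, IsLeftIdealIn E L ∧ IsClosed L) :
    IsLeftIdealIn E (⋂₀ c) := by
  have : Nonempty c := hcne.to_subtype
  obtain ⟨L, hL⟩ := hcne
  refine ⟨?_, (sInter_subset_of_mem hL).trans (hcL L hL).1.2.1, fun p hp q hq => ?_⟩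
  · have hdir : DirectedOn (· ⊇ ·) c := fun i hi j hj =>
      (hc.total hi hj).elim (fun h => ⟨i, hi, subset_rfl, h⟩) fun h => ⟨j, hj, h, subset_rfl⟩
    exact IsCompact.nonempty_sInter_of_directed_nonempty_isCompact_isClosed hdir
      (fun L hL => (hcL L hL).1.1) (fun L hL => (hcL L hL).2.isCompact) fun L hL => (hcL L hL).2
  · exact mem_sInter.mpr fun L hL => (hcL L hL).1.2.2 p hp q (mem_sInter.mp hq L hL)

/-- Zorn's lemma on closed left ideals: every left ideal `L` contains the closed one `E + w`,
`w ∈ L`. -/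
lemma IsLeftIdealIn.exists_minimal (hE : ∀ p ∈ E, ∀ q ∈ E, p + q ∈ E) (hEcl : IsClosed E)
    {L₀ : Set (Ultrafilter σ)} (hL₀ : IsLeftIdealIn E L₀) :
    ∃ L ⊆ L₀, IsMinimalLeftIdealIn E L := by
  let C := {L : Set (Ultrafilter σ) | IsLeftIdealIn E L ∧ IsClosed L}
  have image_mem : ∀ w ∈ E, (· + w) '' E ∈ C := fun w hw =>
    ⟨isLeftIdealIn_image_add_right hE hw, isClosed_image_add_right hEcl w⟩
  have chain_bound : ∀ c ⊆ C, IsChain (· ⊆ ·) c → c.Nonempty → ∃ lb ∈ C, ∀ L ∈ c, lb ⊆ L :=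
    fun c hcC hc hcne => ⟨⋂₀ c, ⟨hc.isLeftIdealIn_sInter hcne hcC,
      isClosed_sInter fun L hL => (hcC hL).2⟩, fun _ => sInter_subset_of_mem⟩
  obtain ⟨w, hw⟩ := hL₀.1
  obtain ⟨m, hm, hmin⟩ := zorn_superset_nonempty C chain_bound _ (image_mem w (hL₀.2.1 hw))
  refine ⟨m, hm.trans (hL₀.image_add_right_subset hw), hmin.1.1, fun L hL hLm => ?_⟩
  obtain ⟨w', hw'⟩ := hL.1
  have hw'L := hL.image_add_right_subset hw'
  exact hLm.antisymm ((hmin.2 (image_mem w' (hL.2.1 hw')) (hw'L.trans hLm)).trans hw'L)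

end Ideals

section EStar

lemma mem_eStar_iff_le {S : AddSubsemigroup T} {e : T} {p : Ultrafilter S} :
    p ∈ EStar S e ↔ (p : Filter S) ≤ comap Subtype.val (𝓝 e) :=
  map_le_iff_le_comap

lemma isClosed_eStar (S : AddSubsemigroup T) (e : T) : IsClosed (EStar S e) := by
  have h : EStar S e = ⋂ U ∈ 𝓝 e, {p : Ultrafilter S | {s : S | (s : T) ∈ U} ∈ p} := by
    ext p
    simp only [EStar, mem_ofPred_eq, mem_iInter]
  rw [h]
  exact isClosed_biInter fun U _ => ultrafilter_isClosed_basic _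

lemma add_mem_eStar (S : AddSubsemigroup T) {e : T}
    (hl : ∀ t : T, Continuous fun x : T => t + x) (hr : ∀ t : T, Continuous fun x : T => x + t)
    (he : e + e = e) {p q : Ultrafilter S} (hp : p ∈ EStar S e) (hq : q ∈ EStar S e) :
    p + q ∈ EStar S e := by
  intro U hU
  have hU' : {x : T | x + e ∈ interior U} ∈ 𝓝 e :=
    (hr e).continuousAt.preimage_mem_nhds (by rw [he]; exact interior_mem_nhds.mpr hU)
  refine (Ultrafilter.eventually_add p q _).mpr ?_
  filter_upwards [hp _ hU'] with a ha
  filter_upwards [hq _ ((hl a).continuousAt.preimage_mem_nhds (isOpen_interior.mem_nhds ha))]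
    with b hb
  exact interior_subset hb

lemma syndeticNear_of_forall_eStar {S : AddSubsemigroup T} {e : T} {B : Set S}
    (h : ∀ U ∈ 𝓝 e, ∀ q ∈ EStar S e, ∃ t : S, (t : T) ∈ U ∧ {s | t + s ∈ B} ∈ q) :
    SyndeticNear S e B := by
  intro U hU
  obtain ⟨F, hFU, hF, hcover⟩ := (isClosed_eStar S e).isCompact.elim_finite_subcover_image
    (b := {t : S | (t : T) ∈ U}) (c := fun t => {q : Ultrafilter S | {s | t + s ∈ B} ∈ q})
    (fun t _ => ultrafilter_isOpen_basic _)
    fun q hq => by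
      obtain ⟨t, ht, htq⟩ := h U hU q hq
      exact mem_biUnion ht htq
  have hmem : {s : S | ∃ t ∈ F, t + s ∈ B} ∈ comap (↑) (𝓝 e) := by
    refine mem_iff_ultrafilter.mpr fun q hq => ?_
    obtain ⟨t, htF, ht⟩ := mem_iUnion₂.mp (hcover (mem_eStar_iff_le.mpr hq))
    exact mem_of_superset ht fun s hs => ⟨t, htF, hs⟩
  obtain ⟨V, hV, hVB⟩ := mem_comap.mp hmem
  refine ⟨hF.toFinset, fun t ht => hFU (hF.mem_toFinset.mp ht), V, hV, fun s hs => ?_⟩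
  obtain ⟨t, htF, hts⟩ := hVB hs
  exact ⟨t, hF.mem_toFinset.mpr htF, hts⟩

lemma exists_mem_eStar_tp_eq {S : AddSubsemigroup T} {e : T}
    {X : Type*} [TopologicalSpace X] [CompactSpace X] [T2Space X] {Ts : S → X → X} {z y : X}
    (h : ∀ U ∈ 𝓝 e, ∀ W ∈ 𝓝 y, ∃ a : S, (a : T) ∈ U ∧ Ts a z ∈ W) :
    ∃ v ∈ EStar S e, TP Ts v z = y := by
  let f := comap ((↑) : S → T) (𝓝 e) ⊓ comap (fun a => Ts a z) (𝓝 y)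
  have : f.NeBot := by
    refine inf_neBot_iff.mpr fun A hA B hB => ?_
    obtain ⟨U, hU, hUA⟩ := mem_comap.mp hA
    obtain ⟨W, hW, hWB⟩ := mem_comap.mp hB
    obtain ⟨a, haU, haW⟩ := h U hU W hW
    exact ⟨a, hUA haU, hWB haW⟩
  have hle : ↑(Ultrafilter.of f) ≤ f := Ultrafilter.of_le f
  exact ⟨Ultrafilter.of f, mem_eStar_iff_le.mpr (hle.trans inf_le_left),
    tp_eq_of_tendsto (tendsto_iff_comap.mpr (hle.trans inf_le_right))⟩

end EStar

section Dynamics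

variable {S : AddSubsemigroup T} {e : T} {X : Type*} [TopologicalSpace X] [CompactSpace X]
  [T2Space X] {Ts : S → X → X}

lemma unifRecNear_of_tp_eq (hTcont : ∀ s, Continuous (Ts s))
    (hTact : ∀ s t z, Ts s (Ts t z) = Ts (s + t) z)
    (hE : ∀ p ∈ EStar S e, ∀ q ∈ EStar S e, p + q ∈ EStar S e)
    {L : Set (Ultrafilter S)} (hL : IsMinimalLeftIdealIn (EStar S e) L)
    {u : Ultrafilter S} (hu : u ∈ L) {y : X} (hy : TP Ts u y = y) : UnifRecNear S e Ts y := by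
  intro W hW
  refine syndeticNear_of_forall_eStar fun U hU q hq => ?_
  have hqu : u ∈ (· + (q + u)) '' EStar S e := by
    rwa [hL.image_add_right_eq_s9 hE (hL.1.2.2 q hq u hu)]
  obtain ⟨l, hl, hlu : l + (q + u) = u⟩ := hqu
  have hly : TP Ts l (TP Ts q y) = y := by
    calc TP Ts l (TP Ts q y) = TP Ts l (TP Ts q (TP Ts u y)) := by rw [hy]
      _ = TP Ts (l + (q + u)) y := by rw [tp_add hTcont hTact, tp_add hTcont hTact]
      _ = y := by rw [hlu, hy]
  have hlW : {a | Ts a (TP Ts q y) ∈ interior W} ∈ l := by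
    have := tendsto_tp Ts l (TP Ts q y)
    rw [hly] at this
    exact this (interior_mem_nhds.mpr hW)
  obtain ⟨a, haW, haU⟩ := l.nonempty_of_mem (inter_mem hlW (hl U hU))
  refine ⟨a, haU, ?_⟩
  filter_upwards [tendsto_tp Ts q y
    ((hTcont a).continuousAt.preimage_mem_nhds (isOpen_interior.mem_nhds haW))] with s hs
  rw [← hTact]
  exact interior_subset hs

lemma UnifRecNear.exists_tp_tp_eq (hTcont : ∀ s, Continuous (Ts s))
    (hTact : ∀ s t z, Ts s (Ts t z) = Ts (s + t) z) {y : X} (hy : UnifRecNear S e Ts y)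
    {w : Ultrafilter S} (hw : w ∈ EStar S e) : ∃ v ∈ EStar S e, TP Ts v (TP Ts w y) = y := by
  refine exists_mem_eStar_tp_eq fun U hU W hW => ?_
  obtain ⟨C, hC, hCcl, hCW⟩ := exists_mem_nhds_isClosed_subset hW
  obtain ⟨F, hFU, V, hV, hcover⟩ := hy C hC U hU
  have hFw : ⋃ t ∈ (F : Set S), {s | Ts (t + s) y ∈ C} ∈ w :=
    mem_of_superset (hw V hV) fun s hs => by
      obtain ⟨t, htF, ht⟩ := hcover s hs
      exact mem_biUnion htF ht
  obtain ⟨t, htF, ht⟩ := (Ultrafilter.finite_biUnion_mem_iff F.finite_toSet).mp hFw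
  refine ⟨t, hFU t htF, hCW (hCcl.mem_of_tendsto
    ((hTcont t).continuousAt.tendsto.comp (tendsto_tp Ts w y)) ?_)⟩
  filter_upwards [ht] with s hs
  rwa [Function.comp_apply, hTact]

lemma IsMinimalLeftIdealIn.exists_idempotent_tp_eq (hTcont : ∀ s, Continuous (Ts s))
    (hTact : ∀ s t z, Ts s (Ts t z) = Ts (s + t) z)
    (hE : ∀ p ∈ EStar S e, ∀ q ∈ EStar S e, p + q ∈ EStar S e)
    {L : Set (Ultrafilter S)} (hL : IsMinimalLeftIdealIn (EStar S e) L)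
    {y : X} (hy : UnifRecNear S e Ts y) : ∃ u ∈ L, u + u = u ∧ TP Ts u y = y := by
  obtain ⟨w, hw⟩ := hL.1.1
  obtain ⟨v, hv, hvw⟩ := hy.exists_tp_tp_eq hTcont hTact (hL.1.2.1 hw)
  have hfix : IsClosed {m : Ultrafilter S | TP Ts m y = y} :=
    isClosed_eq (continuous_tp Ts y) continuous_const
  obtain ⟨u, ⟨huL, huy⟩, huu⟩ := exists_idempotent_in_compact_add_subsemigroup
    Ultrafilter.continuous_add_left (L ∩ {m | TP Ts m y = y})
    ⟨v + w, hL.1.2.2 v hv w hw, (tp_add hTcont hTact v w y).trans hvw⟩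
    ((hL.isClosed hE (isClosed_eStar S e)).inter hfix).isCompact
    fun m₁ hm₁ m₂ hm₂ => ⟨hL.1.2.2 m₁ (hL.1.2.1 hm₁.1) m₂ hm₂.1,
      by rw [mem_ofPred_eq, tp_add hTcont hTact, hm₂.2, hm₁.2]⟩
  exact ⟨u, huL, huu, huy⟩

end Dynamics

variable [T2Space T]

theorem idempotent_in_K_iff_general (S : AddSubsemigroup T)
    (hl : ∀ t : T, Continuous fun x : T => t + x)
    (hr : ∀ t : T, Continuous fun x : T => x + t)
    (e : T) (he : e + e = e)
    {X : Type u} [TopologicalSpace X] [CompactSpace X] [T2Space X]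
    (Ts : S → X → X) (hTcont : ∀ s, Continuous (Ts s))
    (hTact : ∀ s t z, Ts s (Ts t z) = Ts (s + t) z) (x y : X) :
    (∃ u ∈ SmallestIdeal (EStar S e), u + u = u ∧ TP Ts u x = y) ↔
      UnifRecNear S e Ts y ∧ ProximalNear S e Ts x y := by
  have hE : ∀ p ∈ EStar S e, ∀ q ∈ EStar S e, p + q ∈ EStar S e :=
    fun p hp q hq => add_mem_eStar S hl hr he hp hq
  constructor
  · rintro ⟨u, ⟨L, hL, huL⟩, huu, rfl⟩
    have hu : TP Ts u (TP Ts u x) = TP Ts u x := by rw [← tp_add hTcont hTact, huu]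
    exact ⟨unifRecNear_of_tp_eq hTcont hTact hE hL huL hu, u, hL.1.2.1 huL, hu.symm⟩
  · rintro ⟨hy, p, hp, hpxy⟩
    obtain ⟨L, hLp, hL⟩ :=
      (isLeftIdealIn_image_add_right hE hp).exists_minimal hE (isClosed_eStar S e)
    obtain ⟨u, huL, huu, huy⟩ := hL.exists_idempotent_tp_eq hTcont hTact hE hy
    obtain ⟨r, -, rfl⟩ := hLp huL
    refine ⟨r + p, ⟨L, hL, huL⟩, huu, ?_⟩
    rw [tp_add hTcont hTact, hpxy, ← tp_add hTcont hTact, huy]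

/-- `T_u(x) = y` for some idempotent `u ∈ K(e*_S)` iff `y` is uniformly
recurrent near `e` and `x, y` are proximal near `e`. -/
theorem idempotent_in_K_iff (S : AddSubsemigroup T) (hdense : Dense (S : Set T))
    (hl : ∀ t : T, Continuous fun x : T => t + x)
    (hr : ∀ t : T, Continuous fun x : T => x + t)
    (e : T) (he : e + e = e)
    {X : Type u} [TopologicalSpace X] [CompactSpace X] [T2Space X]
    (Ts : S → X → X) (hTcont : ∀ s, Continuous (Ts s))
    (hTact : ∀ s t z, Ts s (Ts t z) = Ts (s + t) z) (x y : X) :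
    (∃ u ∈ SmallestIdeal (EStar S e), u + u = u ∧ TP Ts u x = y) ↔
      UnifRecNear S e Ts y ∧ ProximalNear S e Ts x y :=
  idempotent_in_K_iff_general S hl hr e he Ts hTcont hTact x y

end NearIdem
end
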